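/- Fix a subset Y of a finite set X and a permutation τ of X with τ(Y) = Y. If β is the induced permutation of α ∈ S_X on Y (obtained by deleting from the cycle decomposition of α all symbols not in Y), then the induced permutation of τατ⁻¹ on Y equals τβτ⁻¹ (restricting τ to Y). -/
import Mathlib


open scoped Classical

/-- The induced permutation (first-return map) of `α ∈ S_X` on `Y ⊆ X`: it sends
`y` to `α^k(y)` where `k ≥ 1` is minimal with `α^k(y) ∈ Y` (this is the
permutation obtained by deleting from the cycle decomposition of `α` all symbols
not in `Y`).  Points whose orbit never returns to `Y` are left fixed. -/
noncomputable def inducedPerm {X : Type*} [Fintype X] [DecidableEq X]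
    (α : Equiv.Perm X) (Y : Finset X) (y : X) : X :=
  if h : ∃ k, 0 < k ∧ (α ^ k) y ∈ Y then (α ^ Nat.find h) y else y

/-- Fix `Y ⊆ X` and a permutation `τ` of `X` with `τ(Y) = Y`.
If `β` is the induced permutation of `α` on `Y`, then the induced permutation of
`τατ⁻¹` on `Y` is `τβτ⁻¹`; i.e. for every `y ∈ Y`, the induced permutation of
`τατ⁻¹` sends `τ(y)` to `τ(β(y))`. -/
theorem inducedPerm_conj
    {X : Type*} [Fintype X] [DecidableEq X]
    (α τ : Equiv.Perm X) (Y : Finset X)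
    (hτ : ∀ x, x ∈ Y ↔ τ x ∈ Y) :
    ∀ y ∈ Y, inducedPerm (τ * α * τ⁻¹) Y (τ y) = τ (inducedPerm α Y y) := by
  intro y _
  have hpow : ∀ k : ℕ, ((τ * α * τ⁻¹) ^ k) (τ y) = τ ((α ^ k) y) := by
    intro k
    have : (τ * α * τ⁻¹) ^ k = τ * α ^ k * τ⁻¹ := by
      induction k with
      | zero => simp
      | succ n ih => rw [pow_succ, pow_succ, ih]; group
    simp [this, Equiv.Perm.mul_apply]
  have hiff : ∀ k : ℕ, (0 < k ∧ ((τ * α * τ⁻¹) ^ k) (τ y) ∈ Y) ↔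
      (0 < k ∧ (α ^ k) y ∈ Y) := by
    intro k
    rw [hpow k]
    exact and_congr Iff.rfl (hτ _).symm
  unfold inducedPerm
  by_cases h : ∃ k, 0 < k ∧ (α ^ k) y ∈ Y
  · have h' : ∃ k, 0 < k ∧ ((τ * α * τ⁻¹) ^ k) (τ y) ∈ Y := by
      obtain ⟨k, hk⟩ := h; exact ⟨k, (hiff k).mpr hk⟩
    rw [dif_pos h, dif_pos h']
    have : Nat.find h' = Nat.find h := by
      apply le_antisymm
      · exact Nat.find_le ((hiff _).mpr (Nat.find_spec h))
      · exact Nat.find_le ((hiff _).mp (Nat.find_spec h'))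
    rw [this, hpow]
  · have h' : ¬ ∃ k, 0 < k ∧ ((τ * α * τ⁻¹) ^ k) (τ y) ∈ Y := by
      rintro ⟨k, hk⟩; exact h ⟨k, (hiff k).mp hk⟩
    rw [dif_neg h, dif_neg h']
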